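/- For any set X, any integer p ≥ 1 and any functions g, f_1,…,f_p : X → ℝ, one has δ_p( ḡ · δ_{p-1} Alt_p(f_1⊗⋯⊗f_p) ) = δ_p Alt_{p+1}(g⊗f_1⊗⋯⊗f_p) pointwise on X^{p+2}, where ḡ(x_0,…,x_p) := (1/(p+1)) Σ_{i=0}^p g(x_i). -/
import Mathlib


noncomputable section

/-- The antisymmetrizer: `Alt_p(F)(x_1,…,x_p) = (1/p!) Σ_{σ ∈ S_p} sgn(σ) F(x_{σ(1)},…,x_{σ(p)})`. -/
def altP {X : Type*} {p : ℕ} (F : (Fin p → X) → ℝ) : (Fin p → X) → ℝ :=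
  fun x => (Nat.factorial p : ℝ)⁻¹ *
    ∑ σ : Equiv.Perm (Fin p), ((Equiv.Perm.sign σ : ℤ) : ℝ) * F (x ∘ σ)

/-- The Kolmogorov–Alexander–Spanier coboundary operator:
`δF(x_0, …, x_p) = Σ_{i=0}^p (-1)^i F(x_0, …, x̂_i, …, x_p)`. -/
def kasDelta {X : Type*} {p : ℕ} (F : (Fin p → X) → ℝ) : (Fin (p + 1) → X) → ℝ :=
  fun x => ∑ i : Fin (p + 1), (-1 : ℝ) ^ (i : ℕ) * F (x ∘ i.succAbove)

/-- The tensor product of functions: `(f_1 ⊗ … ⊗ f_p)(x_1,…,x_p) = f_1(x_1)⋯f_p(x_p)`. -/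
def tens {X : Type*} {p : ℕ} (f : Fin p → X → ℝ) : (Fin p → X) → ℝ :=
  fun x => ∏ i, f i (x i)

/-- `ḡ(x_0,…,x_{n-1}) := (1/n) Σ_{i=0}^{n-1} g(x_i)`. -/
def gbar {X : Type*} (n : ℕ) (g : X → ℝ) : (Fin n → X) → ℝ :=
  fun x => (n : ℝ)⁻¹ * ∑ i, g (x i)

open Equiv Equiv.Perm

/-- The simplicial identity for `Fin.succAbove`. -/
lemma fin_sasa {n : ℕ} (a b : Fin (n + 1)) (h : a ≤ b) (k : Fin n) :
    b.succ.succAbove (a.succAbove k) = a.castSucc.succAbove (b.succAbove k) := by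
  dsimp [Fin.succAbove]
  rcases a with ⟨a, _⟩
  rcases b with ⟨b, _⟩
  rcases k with ⟨k, _⟩
  split_ifs <;> simp_all [Fin.le_def, Fin.lt_def] <;> omega

/-- `δ ∘ δ = 0`. -/
lemma kasDelta_kasDelta {X : Type*} {q : ℕ} (F : (Fin q → X) → ℝ) (x : Fin (q + 2) → X) :
    kasDelta (kasDelta F) x = 0 := by
  unfold kasDelta
  simp only [Finset.mul_sum]
  rw [← Fintype.sum_prod_type']
  refine Finset.sum_ninvolution
    (fun ij => if h : (ij.1 : ℕ) ≤ (ij.2 : ℕ)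
      then (ij.2.succ, ⟨ij.1, by omega⟩)
      else (ij.2.castSucc, ij.1.pred (by intro h0; apply h; rw [h0]; simp)))
    ?_ ?_ (fun _ => Finset.mem_univ _) ?_
  · rintro ⟨i, j⟩
    dsimp only
    by_cases h : (i : ℕ) ≤ (j : ℕ)
    · rw [dif_pos h]
      have hc : (x ∘ i.succAbove) ∘ j.succAbove
          = (x ∘ j.succ.succAbove) ∘ (⟨(i : ℕ), by omega⟩ : Fin (q + 1)).succAbove := by
        funext k
        have h2 := fin_sasa (⟨(i : ℕ), by omega⟩ : Fin (q + 1)) j (by simpa [Fin.le_def]) k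
        have hcast : ((⟨(i : ℕ), by omega⟩ : Fin (q + 1)).castSucc) = i := rfl
        rw [hcast] at h2
        simp only [Function.comp_apply, h2]
      rw [hc]
      simp only [Fin.val_succ, pow_succ]
      ring
    · rw [dif_neg h]
      push_neg at h
      have hi0 : i ≠ 0 := by intro h0; rw [h0] at h; simp at h
      have hc : (x ∘ i.succAbove) ∘ j.succAbove
          = (x ∘ j.castSucc.succAbove) ∘ (i.pred hi0).succAbove := by
        funext k
        have h2 := fin_sasa j (i.pred hi0) (by simp [Fin.le_def]; omega) k
        have hsucc : (i.pred hi0).succ = i := Fin.succ_pred _ _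
        rw [hsucc] at h2
        simp only [Function.comp_apply, h2]
      rw [hc]
      have hv : ((j.castSucc : Fin (q + 2)) : ℕ) = (j : ℕ) := rfl
      have hv2 : ((i.pred hi0 : Fin (q + 1)) : ℕ) = (i : ℕ) - 1 := rfl
      rw [hv, hv2]
      have hpow : (-1 : ℝ) ^ (i : ℕ) = -(-1 : ℝ) ^ ((i : ℕ) - 1) := by
        conv_lhs => rw [show (i : ℕ) = ((i : ℕ) - 1) + 1 by omega]
        rw [pow_succ]; ring
      rw [hpow]; ring
  · rintro ⟨i, j⟩ -
    dsimp only
    by_cases h : (i : ℕ) ≤ (j : ℕ)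
    · rw [dif_pos h]
      intro heq
      have h1 : ((j.succ : Fin (q + 2)) : ℕ) = (i : ℕ) := by
        have := congrArg Prod.fst heq; simp only [Prod.fst] at this; rw [this]
      simp at h1; omega
    · rw [dif_neg h]
      intro heq
      have h1 : ((j.castSucc : Fin (q + 2)) : ℕ) = (i : ℕ) := by
        have := congrArg Prod.fst heq; simp only [Prod.fst] at this; rw [this]
      simp at h1; omega
  · rintro ⟨i, j⟩
    dsimp only
    by_cases h : (i : ℕ) ≤ (j : ℕ)
    · rw [dif_pos h, dif_neg (by simp; omega)]
      ext <;> simp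
    · rw [dif_neg h, dif_pos (by simp [Fin.le_def]; omega)]
      push_neg at h
      ext <;> simp <;> omega

/-- `ḡ ⬝ δF = A + δH` where `A(x) = (p+1)⁻¹ Σ_i (-1)^i g(x_i) F(x̂_i)` and
`H(y) = (p+1)⁻¹ (Σ_j g(y_j)) F(y)`. -/
lemma split_lemma {X : Type*} {p : ℕ} (g : X → ℝ) (F : (Fin p → X) → ℝ)
    (x : Fin (p + 1) → X) :
    (gbar (p + 1) g * kasDelta F) x =
      (((p : ℝ) + 1)⁻¹ * ∑ i : Fin (p + 1), (-1 : ℝ) ^ (i : ℕ) * (g (x i) * F (x ∘ i.succAbove)))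
      + kasDelta (fun y => ((p : ℝ) + 1)⁻¹ * (∑ j, g (y j)) * F y) x := by
  simp only [Pi.mul_apply, gbar, kasDelta]
  have expand : ∀ (c : ℝ) (t : Fin (p + 1) → ℝ), c * ∑ i, t i = ∑ i, c * t i :=
    fun c t => Finset.mul_sum _ _ _
  rw [expand, expand, expand, ← Finset.sum_add_distrib]
  refine Finset.sum_congr rfl fun i _ => ?_
  rw [← Finset.mul_sum]
  have hs : (∑ j, g (x j)) = g (x i) + ∑ k, g (x (i.succAbove k)) :=
    Fin.sum_univ_succAbove (fun j => g (x j)) i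
  rw [hs]
  simp only [Function.comp_apply]
  push_cast
  ring

/-- The coset bijection `Fin (p+1) × S_p ≃ S_{p+1}`, `(i, τ) ↦ c_i⁻¹ ∘ τ̂`. -/
def Phi (p : ℕ) : Fin (p + 1) × Perm (Fin p) → Perm (Fin (p + 1)) :=
  fun iτ => (Fin.cycleRange iτ.1)⁻¹ * Equiv.Perm.decomposeFin.symm (0, iτ.2)

lemma Phi_zero {p : ℕ} (i : Fin (p + 1)) (τ : Perm (Fin p)) : Phi p (i, τ) 0 = i := by
  simp [Phi, Perm.mul_apply, Equiv.Perm.decomposeFin_symm_apply_zero, Perm.inv_def,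
    Fin.cycleRange_symm_zero]

lemma Phi_succ {p : ℕ} (i : Fin (p + 1)) (τ : Perm (Fin p)) (k : Fin p) :
    Phi p (i, τ) k.succ = i.succAbove (τ k) := by
  simp [Phi, Perm.mul_apply, Equiv.Perm.decomposeFin_symm_apply_succ, Perm.inv_def,
    Fin.cycleRange_symm_succ]

lemma Phi_sign {p : ℕ} (i : Fin (p + 1)) (τ : Perm (Fin p)) :
    ((Perm.sign (Phi p (i, τ)) : ℤ) : ℝ) = (-1 : ℝ) ^ (i : ℕ) * ((Perm.sign τ : ℤ) : ℝ) := by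
  have : Perm.sign (Phi p (i, τ)) = (-1) ^ (i : ℕ) * Perm.sign τ := by
    rw [Phi, map_mul, map_inv, Fin.sign_cycleRange, Equiv.Perm.decomposeFin.symm_sign]
    simp
  rw [this]; push_cast; ring

lemma Phi_bij {p : ℕ} : Function.Bijective (Phi p) := by
  rw [Fintype.bijective_iff_injective_and_card]
  constructor
  · rintro ⟨i, τ⟩ ⟨i', τ'⟩ h
    have h0 : i = i' := by rw [← Phi_zero i τ, ← Phi_zero i' τ', h]
    subst h0
    have hτ : τ = τ' := by
      ext k
      have := congrArg (fun σ : Perm (Fin (p + 1)) => σ k.succ) h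
      simp only [Phi_succ] at this
      exact congrArg Fin.val (Fin.succAbove_right_injective this)
    rw [hτ]
  · simp [Fintype.card_prod, Fintype.card_perm, Nat.factorial_succ, Nat.mul_comm]

/-- Expansion of the antisymmetrizer over cosets:
`Alt_{p+1}(g ⊗ f)(x) = (p+1)⁻¹ Σ_i (-1)^i g(x_i) Alt_p(f)(x̂_i)`. -/
lemma altP_cons {X : Type*} {p : ℕ} (g : X → ℝ) (f : Fin p → X → ℝ) (x : Fin (p + 1) → X) :
    altP (tens (Fin.cons g f)) x
      = ((p : ℝ) + 1)⁻¹ * ∑ i : Fin (p + 1), (-1 : ℝ) ^ (i : ℕ) *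
          (g (x i) * altP (tens f) (x ∘ i.succAbove)) := by
  unfold altP
  have hfact : ((Nat.factorial (p + 1) : ℝ))⁻¹
      = ((p : ℝ) + 1)⁻¹ * ((Nat.factorial p : ℝ))⁻¹ := by
    rw [Nat.factorial_succ]; push_cast; rw [mul_inv]
  rw [hfact]
  have key : (∑ σ : Perm (Fin (p + 1)), ((Perm.sign σ : ℤ) : ℝ) * tens (Fin.cons g f) (x ∘ σ))
      = ∑ iτ : Fin (p + 1) × Perm (Fin p),
          ((-1 : ℝ) ^ (iτ.1 : ℕ) * ((Perm.sign iτ.2 : ℤ) : ℝ)) *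
            (g (x iτ.1) * ∏ k, f k (x (iτ.1.succAbove (iτ.2 k)))) := by
    refine (Fintype.sum_bijective (Phi p) Phi_bij _ _ ?_).symm
    rintro ⟨i, τ⟩
    have ht : tens (Fin.cons g f) (x ∘ Phi p (i, τ))
        = g (x i) * ∏ k, f k (x (i.succAbove (τ k))) := by
      unfold tens
      rw [Fin.prod_univ_succ]
      simp only [Function.comp_apply, Fin.cons_zero, Fin.cons_succ, Phi_zero, Phi_succ]
    rw [ht, Phi_sign]
  rw [key, Fintype.sum_prod_type]
  simp only [Finset.mul_sum]
  refine Finset.sum_congr rfl fun i _ => ?_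
  refine Finset.sum_congr rfl fun τ _ => ?_
  simp only [tens, Function.comp_apply]
  ring

lemma kasDelta_add {X : Type*} {p : ℕ} (F G : (Fin p → X) → ℝ) (x : Fin (p + 1) → X) :
    kasDelta (F + G) x = kasDelta F x + kasDelta G x := by
  unfold kasDelta
  simp [Pi.add_apply, mul_add, Finset.sum_add_distrib]

/-- `δ_p( ḡ ⬝ δ_{p-1} Alt_p(f_1⊗⋯⊗f_p) ) = δ_p Alt_{p+1}(g⊗f_1⊗⋯⊗f_p)` pointwise
on `X^{p+2}`. -/
theorem kasDelta_gbar_kasDelta_altP_tens {X : Type*} (p : ℕ) (hp : 1 ≤ p)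
    (g : X → ℝ) (f : Fin p → X → ℝ) (x : Fin (p + 2) → X) :
    kasDelta (gbar (p + 1) g * kasDelta (altP (tens f))) x =
      kasDelta (altP (tens (Fin.cons g f))) x := by
  have hfun : gbar (p + 1) g * kasDelta (altP (tens f))
      = altP (tens (Fin.cons g f))
        + kasDelta (fun y => ((p : ℝ) + 1)⁻¹ * (∑ j, g (y j)) * altP (tens f) y) := by
    funext y
    rw [Pi.add_apply, split_lemma g (altP (tens f)) y, altP_cons g f y]
  rw [hfun, kasDelta_add, kasDelta_kasDelta, add_zero]
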